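/- arXiv:2508.19741 — 2 statements merged into one kernel-verified Lean document; each statement's English description precedes it below -/
import Mathlib

section
/- For every nonnegative integer n, the number E(n) of two-color partitions of n with distinct parts in which even parts may occur only in blue equals the number p̄ₒ(n) of overpartitions of n into odd parts. Formally: the number of pairs (g, b), where g is a finite set of distinct odd positive integers and b is a finite set of distinct positive integers with the sum of all elements of g and b equal to n, is equal to the number of pairs (μ, ν), where μ is a finite set of distinct odd positive integers and ν is a finite multiset of odd positive integers with the sum of all elements of μ and ν equal to n. -/
/-!
The green parts of a two-color partition and the overlined parts of an overpartition are the
same kind of object, so it suffices to match the blue parts `b` with the non-overlined parts `ν`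
by a sum-preserving bijection. By Euler's theorem (`Nat.Partition.card_odds_eq_card_distincts`),
for each `m` there are as many sets of distinct positive integers summing to `m` as multisets of
odd positive integers summing to `m`; gluing bijections between these finite fibers gives one.
-/

open Finset

theorem Nat.card_subtype_prod_congr_right {α β γ M : Type*} [Add M] (R : α → Prop)
    (S : β → Prop) (T : γ → Prop) (f : α → M) (h : β → M) (k : γ → M)
    (e : {b // S b} ≃ {c // T c}) (he : ∀ b, k (e b) = h b) (n : M) :
    Nat.card {p : α × β // R p.1 ∧ S p.2 ∧ f p.1 + h p.2 = n} =
      Nat.card {p : α × γ // R p.1 ∧ T p.2 ∧ f p.1 + k p.2 = n} := by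
  have he' (c) : h (e.symm c) = k c := by rw [← he, e.apply_symm_apply]
  exact Nat.card_congr
    { toFun p := ⟨(p.1.1, e ⟨p.1.2, p.2.2.1⟩), p.2.1, (e _).2, by rw [he]; exact p.2.2.2⟩
      invFun p :=
        ⟨(p.1.1, e.symm ⟨p.1.2, p.2.2.1⟩), p.2.1, (e.symm _).2, by rw [he']; exact p.2.2.2⟩
      left_inv p := by simp
      right_inv p := by simp }

namespace Nat.Partition

def distinctsEquiv (m : ℕ) :
    distincts m ≃ {b : {b : Finset ℕ // ∀ x ∈ b, 0 < x} // ∑ x ∈ b.1, x = m} where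
  toFun p := ⟨⟨⟨p.1.parts, (mem_filter.1 p.2).2⟩, fun _ hx => p.1.parts_pos hx⟩,
    (sum_val _).symm.trans p.1.parts_sum⟩
  invFun b := ⟨⟨b.1.1.val, b.1.2 _, (sum_val _).trans b.2⟩,
    mem_filter.2 ⟨mem_univ _, b.1.1.nodup⟩⟩
  left_inv _ := rfl
  right_inv _ := rfl

def oddsEquiv (m : ℕ) :
    odds m ≃ {ν : {ν : Multiset ℕ // ∀ x ∈ ν, Odd x ∧ 0 < x} // ν.1.sum = m} where
  toFun p := ⟨⟨p.1.parts, fun _ hx =>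
    ⟨Nat.not_even_iff_odd.1 ((mem_filter.1 p.2).2 _ hx), p.1.parts_pos hx⟩⟩, p.1.parts_sum⟩
  invFun ν := ⟨⟨ν.1.1, (ν.1.2 _ · |>.2), ν.2⟩,
    mem_filter.2 ⟨mem_univ _, fun _ hx => Nat.not_even_iff_odd.2 (ν.1.2 _ hx).1⟩⟩
  left_inv _ := rfl
  right_inv _ := rfl

end Nat.Partition

open Nat.Partition in
noncomputable def distinctPartsEquivOddParts :
    {b : Finset ℕ // ∀ x ∈ b, 0 < x} ≃ {ν : Multiset ℕ // ∀ x ∈ ν, Odd x ∧ 0 < x} :=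
  Equiv.ofFiberEquiv fun m => (distinctsEquiv m).symm.trans <|
    (Fintype.equivOfCardEq (by simp [card_odds_eq_card_distincts])).trans (oddsEquiv m)

theorem sum_distinctPartsEquivOddParts (b : {b : Finset ℕ // ∀ x ∈ b, 0 < x}) :
    (distinctPartsEquivOddParts b).1.sum = ∑ x ∈ b.1, x :=
  Equiv.ofFiberEquiv_map (f := fun b : {b : Finset ℕ // ∀ x ∈ b, 0 < x} => ∑ x ∈ b.1, x)
    (g := fun ν : {ν : Multiset ℕ // ∀ x ∈ ν, Odd x ∧ 0 < x} => ν.1.sum) _ b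

/-- `E(n) = p̄ₒ(n)`.
The number of two-color partitions of `n` (pairs `(g, b)` with `g` a finite set of
distinct odd positive integers, `b` a finite set of distinct positive integers,
total sum `n`) equals the number of overpartitions of `n` into odd parts
(pairs `(μ, ν)` with `μ` a finite set of distinct odd positive integers and
`ν` a finite multiset of odd positive integers, total sum `n`). -/
theorem two_color_eq_overpartitions_into_odd (n : ℕ) :
    Nat.card {p : Finset ℕ × Finset ℕ //
      (∀ x ∈ p.1, Odd x ∧ 0 < x) ∧ (∀ x ∈ p.2, 0 < x) ∧
      (∑ x ∈ p.1, x) + (∑ x ∈ p.2, x) = n} =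
    Nat.card {q : Finset ℕ × Multiset ℕ //
      (∀ x ∈ q.1, Odd x ∧ 0 < x) ∧ (∀ x ∈ q.2, Odd x ∧ 0 < x) ∧
      (∑ x ∈ q.1, x) + q.2.sum = n} :=
  Nat.card_subtype_prod_congr_right (fun g => ∀ x ∈ g, Odd x ∧ 0 < x) _ _
    (fun g => ∑ x ∈ g, x) (fun b => ∑ x ∈ b, x) Multiset.sum distinctPartsEquivOddParts
    sum_distinctPartsEquivOddParts n
end

section
/- For every positive integer n, the number E₂(n) of two-color partitions of n counted by E(n) having an even total number of parts equals p̄ₒ(n)/2 + (−1)ⁿ if n is a perfect square, and equals p̄ₒ(n)/2 otherwise. (Equivalently, as integers, 2·E₂(n) = p̄ₒ(n) + 2·(−1)ⁿ if n is a square and 2·E₂(n) = p̄ₒ(n) otherwise.) -/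
/-!
Weighting a two-color partition `(g, b)` by `(-1)^(|g| + |b|)` gives the generating function
`(q; q²)_∞ (q; q)_∞ = (q; q²)_∞² (q²; q²)_∞ = ∑_{j ∈ ℤ} (-1)^j q^{j²}` (Gauss), so the signed
count of `E(n)` is `2 (-1)^n` when `n` is a positive square and `0` otherwise. Without signs,
Euler's theorem (as many partitions into distinct parts as into odd parts) matches the blue parts
of a two-color partition with the non-overlined parts of an odd overpartition, so `E(n) = p̄ₒ(n)`.
Then `2 E₂(n)` is the sum of the two counts.

Gauss's identity is used in the finite form
`∑_k (-1)^k [2N, k]_{q²} q^{(N-k)²} = (-1)^N (q; q²)_N²`, an instance of the `q`-binomial theorem;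
since `[2N, k]_{q²} (q²; q²)_N ≡ 1` modulo `q^(2 min(k, 2N-k) + 2)`, the coefficient of `q^N` in
`(q; q²)_N (q; q)_{2N}` only sees the terms with `(N - k)² = N`.
-/

open Finset Polynomial

section QAnalogues

variable {R : Type*}

def qBinomial [Semiring R] (q : R) : ℕ → ℕ → R
  | _, 0 => 1
  | 0, _ + 1 => 0
  | m + 1, k + 1 => qBinomial q m k + q ^ (k + 1) * qBinomial q m (k + 1)

section Semiring

variable [Semiring R] (q : R)

@[simp] theorem qBinomial_zero_right (m : ℕ) : qBinomial q m 0 = 1 := by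
  cases m <;> rfl

theorem qBinomial_succ_succ (m k : ℕ) :
    qBinomial q (m + 1) (k + 1) = qBinomial q m k + q ^ (k + 1) * qBinomial q m (k + 1) :=
  rfl

theorem qBinomial_eq_zero_of_lt {m k : ℕ} (h : m < k) : qBinomial q m k = 0 := by
  induction m generalizing k with
  | zero => obtain ⟨k, rfl⟩ := Nat.exists_eq_add_one.mpr h; rfl
  | succ m ih =>
    obtain ⟨k, rfl⟩ := Nat.exists_eq_add_one.mpr (Nat.zero_lt_of_lt h)
    rw [qBinomial_succ_succ, ih (by omega), ih (by omega), mul_zero, add_zero]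

@[simp] theorem qBinomial_self (m : ℕ) : qBinomial q m m = 1 := by
  induction m with
  | zero => rfl
  | succ m ih =>
    rw [qBinomial_succ_succ, ih, qBinomial_eq_zero_of_lt q (by omega), mul_zero, add_zero]

end Semiring

variable [CommRing R] (q : R)

theorem prod_add_mul_pow_eq_sum_qBinomial (a b : R) (m : ℕ) :
    ∏ i ∈ range m, (a + b * q ^ i) =
      ∑ k ∈ range (m + 1), q ^ k.choose 2 * qBinomial q m k * a ^ (m - k) * b ^ k := by
  induction m generalizing b with
  | zero => simp
  | succ m ih =>
    have hprod : ∏ i ∈ range m, (a + b * q ^ (i + 1)) =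
        ∑ k ∈ range (m + 1), q ^ k.choose 2 * qBinomial q m k * a ^ (m - k) * (b * q) ^ k := by
      rw [← ih (b * q)]
      exact prod_congr rfl fun i _ => by ring
    have hb : b * ∑ k ∈ range (m + 1),
          q ^ k.choose 2 * qBinomial q m k * a ^ (m - k) * (b * q) ^ k =
        ∑ k ∈ range (m + 1),
          q ^ (k + 1).choose 2 * qBinomial q m k * a ^ (m - k) * b ^ (k + 1) := by
      rw [mul_sum]
      refine sum_congr rfl fun k _ => ?_
      rw [Nat.choose_succ_succ', Nat.choose_one_right]
      ring
    have ha : a * ∑ k ∈ range (m + 1),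
          q ^ k.choose 2 * qBinomial q m k * a ^ (m - k) * (b * q) ^ k =
        ∑ k ∈ range (m + 1), q ^ (k + 1).choose 2 * (q ^ (k + 1) * qBinomial q m (k + 1)) *
          a ^ (m - k) * b ^ (k + 1) + a ^ (m + 1) := by
      calc _ = ∑ k ∈ range (m + 1 + 1),
            q ^ k.choose 2 * q ^ k * qBinomial q m k * a ^ (m + 1 - k) * b ^ k := by
            rw [sum_range_succ _ (m + 1), qBinomial_eq_zero_of_lt q (Nat.lt_succ_self m),
              mul_zero, zero_mul, zero_mul, add_zero, mul_sum]
            refine sum_congr rfl fun k hk => ?_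
            rw [show m + 1 - k = m - k + 1 by simp at hk; omega]
            ring
        _ = _ := by simp [sum_range_succ' _ (m + 1), mul_assoc]
    rw [prod_range_succ', pow_zero, mul_one, hprod, sum_range_succ' _ (m + 1)]
    simp only [qBinomial_succ_succ, mul_add, add_mul, sum_add_distrib, Nat.choose_zero_succ,
      pow_zero, qBinomial_zero_right, Nat.sub_zero, one_mul, mul_one, Nat.add_sub_add_right]
    rw [add_assoc, ← ha, ← hb]
    ring

def qPochhammer (m : ℕ) : R := ∏ i ∈ range m, (1 - q ^ (i + 1))

@[simp] theorem qPochhammer_zero : qPochhammer q 0 = 1 := prod_range_zero _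

theorem qPochhammer_succ (m : ℕ) :
    qPochhammer q (m + 1) = qPochhammer q m * (1 - q ^ (m + 1)) :=
  prod_range_succ _ _

theorem qPochhammer_two_mul (N : ℕ) :
    qPochhammer q (2 * N) = (∏ i ∈ range N, (1 - q ^ (2 * i + 1))) * qPochhammer (q ^ 2) N := by
  induction N with
  | zero => simp
  | succ N ih =>
    rw [show 2 * (N + 1) = 2 * N + 1 + 1 by ring, qPochhammer_succ, qPochhammer_succ, ih,
      prod_range_succ, qPochhammer_succ]
    ring

theorem qBinomial_mul_qPochhammer_mul_qPochhammer (a b : ℕ) :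
    qBinomial q (a + b) a * qPochhammer q a * qPochhammer q b = qPochhammer q (a + b) := by
  induction h : a + b generalizing a b with
  | zero =>
    obtain ⟨rfl, rfl⟩ : a = 0 ∧ b = 0 := by omega
    simp
  | succ s ih =>
    rcases a with _ | a
    · simp [← h]
    rcases b with _ | b
    · simp [← h]
    have h₁ := ih a (b + 1) (by omega)
    have h₂ := ih (a + 1) b (by omega)
    obtain rfl : s = a + b + 1 := by omega
    rw [qPochhammer_succ q b] at h₁
    rw [qPochhammer_succ q a] at h₂
    rw [qBinomial_succ_succ, qPochhammer_succ q a, qPochhammer_succ q b,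
      qPochhammer_succ q (a + b + 1)]
    linear_combination (1 - q ^ (a + 1)) * h₁ + q ^ (a + 1) * (1 - q ^ (b + 1)) * h₂

theorem pow_succ_dvd_qPochhammer_sub {m j : ℕ} (h : m ≤ j) :
    q ^ (m + 1) ∣ qPochhammer q j - qPochhammer q m := by
  induction j, h using Nat.le_induction with
  | base => simp
  | succ j hmj ih =>
    rw [qPochhammer_succ, show qPochhammer q j * (1 - q ^ (j + 1)) - qPochhammer q m
      = (qPochhammer q j - qPochhammer q m) - q ^ (j + 1) * qPochhammer q j by ring]
    exact dvd_sub ih (dvd_mul_of_dvd_left (pow_dvd_pow q (by omega)) _)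

theorem isCoprime_pow_qPochhammer (t m : ℕ) : IsCoprime (q ^ t) (qPochhammer q m) := by
  refine IsCoprime.pow_left ?_
  obtain ⟨r, hr⟩ := pow_succ_dvd_qPochhammer_sub q (Nat.zero_le m)
  rw [qPochhammer_zero, pow_one] at hr
  exact ⟨-r, 1, by linear_combination hr⟩

/-- Modulo `q ^ (m + 1)` every `(q; q)_j` with `j ≥ m` agrees with the unit `(q; q)_m`, so the
product formula `[a + b, a]_q (q; q)_a (q; q)_b = (q; q)_{a+b}` can be cancelled down. -/
theorem pow_succ_dvd_qBinomial_mul_qPochhammer_sub_one {a b N : ℕ} (h : min a b ≤ N) :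
    q ^ (min a b + 1) ∣ qBinomial q (a + b) a * qPochhammer q N - 1 := by
  set m := min a b
  set B := qBinomial q (a + b) a
  set P := qPochhammer q
  have hP (j : ℕ) (hj : m ≤ j) : q ^ (m + 1) ∣ P j - P m := pow_succ_dvd_qPochhammer_sub q hj
  have hBP : B * P a * P b = P (a + b) := qBinomial_mul_qPochhammer_mul_qPochhammer q a b
  have hm : q ^ (m + 1) ∣ (B * P m - 1) * P m := by
    rw [show (B * P m - 1) * P m = (P (a + b) - P m) - B * ((P a - P m) * P b + P m * (P b - P m))
      by linear_combination hBP]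
    exact dvd_sub (hP _ (by omega)) (dvd_mul_of_dvd_right (dvd_add
      (dvd_mul_of_dvd_left (hP a (min_le_left a b)) _)
      (dvd_mul_of_dvd_right (hP b (min_le_right a b)) _)) _)
  rw [show B * P N - 1 = B * (P N - P m) + (B * P m - 1) by ring]
  exact dvd_add (dvd_mul_of_dvd_right (hP N h) _)
    ((isCoprime_pow_qPochhammer q (m + 1) m).dvd_of_dvd_mul_right hm)

end QAnalogues

section Theta

variable {R : Type*} [CommRing R]

theorem two_mul_choose_two_add_eq_dist_sq_add {N k : ℕ} (hk : k ≤ 2 * N) :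
    2 * k.choose 2 + (2 * N + 1) * (2 * N - k) + 2 * k =
      Nat.dist N k ^ 2 + (3 * N ^ 2 + 2 * N) := by
  rcases le_total k N with h | h
  · rw [Nat.dist_eq_sub_of_le_right h]
    qify [h, hk]
    rw [Nat.cast_choose_two]
    ring
  · rw [Nat.dist_eq_sub_of_le h]
    qify [h, hk]
    rw [Nat.cast_choose_two]
    ring

theorem prod_range_two_mul_X_pow_sub_X_pow (N : ℕ) :
    ∏ i ∈ range (2 * N), ((X : R[X]) ^ (2 * N + 1) - X ^ (2 * i + 2)) =
      X ^ (3 * N ^ 2 + 2 * N) * ((-1) ^ N * (∏ i ∈ range N, (1 - X ^ (2 * i + 1))) ^ 2) := by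
  have hsum : ∑ i ∈ range N, (2 * i + 2) = N * (N + 1) := by
    induction N with
    | zero => rfl
    | succ N ih => rw [sum_range_succ, ih]; ring
  have hlow : ∏ i ∈ range N, ((X : R[X]) ^ (2 * N + 1) - X ^ (2 * i + 2)) =
      (-1) ^ N * X ^ (N * (N + 1)) * ∏ i ∈ range N, (1 - X ^ (2 * i + 1)) := by
    rw [← prod_range_reflect (fun i => 1 - (X : R[X]) ^ (2 * i + 1)), ← hsum,
      ← prod_pow_eq_pow_sum, ← card_range N, ← prod_const, card_range, ← prod_mul_distrib,
      ← prod_mul_distrib]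
    refine prod_congr rfl fun i hi => ?_
    rw [show 2 * N + 1 = (2 * i + 2) + (2 * (N - 1 - i) + 1) by simp at hi; omega, pow_add]
    ring
  have hhigh : ∏ i ∈ range N, ((X : R[X]) ^ (2 * N + 1) - X ^ (2 * (N + i) + 2)) =
      X ^ (N * (2 * N + 1)) * ∏ i ∈ range N, (1 - X ^ (2 * i + 1)) := by
    rw [mul_comm N, pow_mul, ← card_range N, ← prod_const, card_range, ← prod_mul_distrib]
    refine prod_congr rfl fun i _ => ?_
    rw [show 2 * (N + i) + 2 = (2 * N + 1) + (2 * i + 1) by ring, pow_add]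
    ring
  rw [two_mul N, prod_range_add, ← two_mul, hlow, hhigh]
  ring

/-- The `q`-binomial theorem with `q = X²`, `a = X ^ (2N + 1)`, `b = -X²`, divided by
`X ^ (3N² + 2N)`. -/
theorem sum_qBinomial_mul_X_pow_dist_sq (N : ℕ) :
    ∑ k ∈ range (2 * N + 1),
        (-1) ^ k * qBinomial ((X : R[X]) ^ 2) (2 * N) k * X ^ (Nat.dist N k ^ 2) =
      (-1) ^ N * (∏ i ∈ range N, (1 - X ^ (2 * i + 1))) ^ 2 := by
  apply (isRegular_X_pow (R := R) (3 * N ^ 2 + 2 * N)).left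
  change X ^ _ * _ = X ^ _ * _
  have hprod : ∏ i ∈ range (2 * N), ((X : R[X]) ^ (2 * N + 1) - X ^ (2 * i + 2)) =
      ∏ i ∈ range (2 * N), (X ^ (2 * N + 1) + -X ^ 2 * (X ^ 2) ^ i) :=
    prod_congr rfl fun i _ => by ring
  rw [← prod_range_two_mul_X_pow_sub_X_pow, hprod, prod_add_mul_pow_eq_sum_qBinomial, mul_sum]
  refine sum_congr rfl fun k hk => ?_
  have hk : k ≤ 2 * N := Nat.lt_succ_iff.mp (mem_range.mp hk)
  calc _ = (-1) ^ k * qBinomial ((X : R[X]) ^ 2) (2 * N) k *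
        X ^ (Nat.dist N k ^ 2 + (3 * N ^ 2 + 2 * N)) := by ring
    _ = _ := by rw [← two_mul_choose_two_add_eq_dist_sq_add hk]; ring

theorem prod_odd_mul_qPochhammer_two_mul_eq_sum (N : ℕ) :
    (∏ i ∈ range N, (1 - X ^ (2 * i + 1))) * qPochhammer (X : R[X]) (2 * N) =
      ∑ k ∈ range (2 * N + 1), C ((-1) ^ (N + k)) *
        (X ^ (Nat.dist N k ^ 2) * (qBinomial (X ^ 2) (2 * N) k * qPochhammer (X ^ 2) N)) := by
  set P := ∏ i ∈ range N, (1 - (X : R[X]) ^ (2 * i + 1))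
  have hsign : ((-1 : R[X]) ^ N) ^ 2 = 1 := by
    rw [← pow_mul, mul_comm, pow_mul, neg_one_sq, one_pow]
  calc P * qPochhammer X (2 * N) = (-1) ^ N * ((-1) ^ N * P ^ 2) * qPochhammer (X ^ 2) N := by
        rw [qPochhammer_two_mul]
        linear_combination (-P ^ 2 * qPochhammer (X ^ 2) N) * hsign
    _ = _ := by
        rw [← sum_qBinomial_mul_X_pow_dist_sq, mul_sum, sum_mul]
        refine sum_congr rfl fun k _ => ?_
        simp only [map_pow, map_neg, map_one]
        ring

theorem coeff_X_pow_mul_of_X_pow_dvd_sub_one {F : R[X]} {e t n : ℕ} (hF : X ^ t ∣ F - 1)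
    (hn : n < e + t) : (X ^ e * F).coeff n = if n = e then 1 else 0 := by
  have hdvd : X ^ (e + t) ∣ X ^ e * (F - 1) := pow_add (X : R[X]) e t ▸ mul_dvd_mul_left _ hF
  rw [show X ^ e * F = X ^ e + X ^ e * (F - 1) by ring, coeff_add, coeff_X_pow,
    X_pow_dvd_iff.mp hdvd n hn, add_zero]

theorem coeff_X_pow_dist_sq_mul_qBinomial_mul_qPochhammer {n k : ℕ} (hk : k ≤ 2 * n) :
    (X ^ (Nat.dist n k ^ 2) *
        (qBinomial (X ^ 2) (2 * n) k * qPochhammer ((X : R[X]) ^ 2) n)).coeff n =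
      if n = Nat.dist n k ^ 2 then 1 else 0 := by
  have hdvd := pow_succ_dvd_qBinomial_mul_qPochhammer_sub_one ((X : R[X]) ^ 2)
    (a := k) (b := 2 * n - k) (N := n) (by omega)
  rw [Nat.add_sub_cancel' hk, ← pow_mul] at hdvd
  have hmin : min k (2 * n - k) + Nat.dist n k = n := by unfold Nat.dist; omega
  have hsq := two_mul_le_add_sq (Nat.dist n k) 1
  exact coeff_X_pow_mul_of_X_pow_dvd_sub_one hdvd (by simp at hsq; omega)

end Theta

theorem sum_range_ite_eq_dist_sq {n : ℕ} (hn : 0 < n) :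
    ∑ k ∈ range (2 * n + 1), (if n = Nat.dist n k ^ 2 then (-1 : ℤ) ^ k else 0) =
      if IsSquare n then 2 else 0 := by
  rw [← sum_filter]
  split_ifs with hsq
  · obtain ⟨m, rfl⟩ := hsq
    have hm : m ≤ m * m := Nat.le_mul_self m
    have hm0 : 0 < m := Nat.pos_of_mul_pos_left hn
    have hfilter : (range (2 * (m * m) + 1)).filter (fun k => m * m = Nat.dist (m * m) k ^ 2) =
        {m * m - m, m * m + m} := by
      ext k
      simp only [mem_filter, mem_range, mem_insert, mem_singleton, sq, Nat.mul_self_inj,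
        Nat.dist]
      omega
    rw [hfilter, sum_pair (by omega), ← Nat.mul_sub_one, ← Nat.mul_succ,
      (Nat.even_mul_pred_self m).neg_one_pow, (Nat.even_mul_succ_self m).neg_one_pow,
      one_add_one_eq_two]
  · refine sum_eq_zero fun k hk => absurd ⟨Nat.dist n k, ?_⟩ hsq
    rw [← sq]
    exact (mem_filter.mp hk).2

theorem coeff_prod_odd_mul_qPochhammer_two_mul {n : ℕ} (hn : 0 < n) :
    ((∏ i ∈ range n, (1 - X ^ (2 * i + 1))) * qPochhammer (X : ℤ[X]) (2 * n)).coeff n =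
      if IsSquare n then 2 * (-1) ^ n else 0 := by
  rw [prod_odd_mul_qPochhammer_two_mul_eq_sum, finsetSum_coeff]
  calc _ = (-1) ^ n *
        ∑ k ∈ range (2 * n + 1), (if n = Nat.dist n k ^ 2 then (-1 : ℤ) ^ k else 0) := by
        rw [mul_sum]
        refine sum_congr rfl fun k hk => ?_
        rw [coeff_C_mul, coeff_X_pow_dist_sq_mul_qBinomial_mul_qPochhammer
          (Nat.lt_succ_iff.mp (mem_range.mp hk)), pow_add]
        split_ifs <;> ring
    _ = _ := by
        rw [sum_range_ite_eq_dist_sq hn]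
        split_ifs <;> ring

section Expansion

variable {R : Type*} [CommRing R]

theorem prod_one_sub_X_pow_eq_sum_powerset (s : Finset ℕ) :
    ∏ k ∈ s, (1 - X ^ k : R[X]) = ∑ T ∈ s.powerset, C ((-1) ^ #T) * X ^ (∑ k ∈ T, k) := by
  have h := prod_add (fun k => C (-1) * (X : R[X]) ^ k) (fun _ => 1) s
  simp only [prod_const_one, mul_one, prod_mul_distrib, prod_const, ← map_pow] at h
  calc ∏ k ∈ s, (1 - X ^ k : R[X]) = ∏ k ∈ s, (C (-1) * X ^ k + 1) :=
        prod_congr rfl fun k _ => by simp only [map_neg, map_one]; ring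
    _ = _ := by rw [h]; exact sum_congr rfl fun T _ => by rw [prod_pow_eq_pow_sum]

theorem coeff_prod_one_sub_X_pow_mul_prod_one_sub_X_pow (s t : Finset ℕ) (n : ℕ) :
    ((∏ k ∈ s, (1 - X ^ k)) * ∏ k ∈ t, (1 - X ^ k) : R[X]).coeff n =
      ∑ p ∈ (s.powerset ×ˢ t.powerset).filter (fun p => ∑ k ∈ p.1, k + ∑ k ∈ p.2, k = n),
        (-1) ^ (#p.1 + #p.2) := by
  rw [prod_one_sub_X_pow_eq_sum_powerset, prod_one_sub_X_pow_eq_sum_powerset, sum_mul_sum,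
    ← sum_product', finsetSum_coeff, sum_filter]
  refine sum_congr rfl fun p _ => ?_
  rw [show C ((-1) ^ #p.1) * X ^ (∑ k ∈ p.1, k) * (C ((-1) ^ #p.2) * X ^ (∑ k ∈ p.2, k)) =
      C ((-1 : R) ^ (#p.1 + #p.2)) * X ^ (∑ k ∈ p.1, k + ∑ k ∈ p.2, k) by
    rw [pow_add, pow_add, map_mul]; ring, coeff_C_mul_X_pow]
  exact if_congr eq_comm rfl rfl

end Expansion

theorem two_mul_card_filter_even_eq {α : Type*} (s : Finset α) (f : α → ℕ) :
    2 * (#(s.filter fun x => Even (f x)) : ℤ) = #s + ∑ x ∈ s, (-1) ^ f x := by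
  rw [natCast_card_filter, mul_sum, card_eq_sum_ones, Nat.cast_sum, ← sum_add_distrib]
  refine sum_congr rfl fun x _ => ?_
  rcases Nat.even_or_odd (f x) with h | h
  · rw [if_pos h, h.neg_one_pow]; norm_num
  · rw [if_neg (Nat.not_even_iff_odd.mpr h), h.neg_one_pow]; norm_num

theorem Nat.card_prod_add_eq_sum_antidiagonal {α β : Type*} (P : α → Prop) (Q : β → Prop)
    (u : α → ℕ) (v : β → ℕ) (n : ℕ) [∀ a, Finite {x // P x ∧ u x = a}]
    [∀ c, Finite {y // Q y ∧ v y = c}] :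
    Nat.card {p : α × β // P p.1 ∧ Q p.2 ∧ u p.1 + v p.2 = n} =
      ∑ ac ∈ antidiagonal n,
        Nat.card {x // P x ∧ u x = ac.1} * Nat.card {y // Q y ∧ v y = ac.2} := by
  let e : {p : α × β // P p.1 ∧ Q p.2 ∧ u p.1 + v p.2 = n} ≃
      Σ ac : antidiagonal n, {x // P x ∧ u x = ac.1.1} × {y // Q y ∧ v y = ac.1.2} :=
    { toFun := fun p => ⟨⟨(u p.1.1, v p.1.2), mem_antidiagonal.2 p.2.2.2⟩,
        ⟨p.1.1, p.2.1, rfl⟩, ⟨p.1.2, p.2.2.1, rfl⟩⟩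
      invFun := fun s => ⟨(s.2.1.1, s.2.2.1), s.2.1.2.1, s.2.2.2.1, by
        rw [s.2.1.2.2, s.2.2.2.2]; exact mem_antidiagonal.1 s.1.2⟩
      left_inv := fun _ => rfl
      right_inv := by
        rintro ⟨⟨⟨a, c⟩, h⟩, ⟨x, hx, hxa⟩, ⟨y, hy, hyc⟩⟩
        simp only at hxa hyc
        subst hxa hyc
        rfl }
  rw [Nat.card_congr e, Nat.card_sigma, ← sum_coe_sort (antidiagonal n)]
  exact sum_congr rfl fun ac _ => Nat.card_prod _ _

def Nat.Partition.multisetEquivOdds (c : ℕ) :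
    {ν : Multiset ℕ // (∀ x ∈ ν, Odd x ∧ 0 < x) ∧ ν.sum = c} ≃ Nat.Partition.odds c where
  toFun ν := ⟨⟨ν.1, fun h => (ν.2.1 _ h).2, ν.2.2⟩,
    mem_filter.mpr ⟨mem_univ _, fun x hx => Nat.not_even_iff_odd.mpr (ν.2.1 x hx).1⟩⟩
  invFun π := ⟨π.1.parts, fun x hx =>
    ⟨Nat.not_even_iff_odd.mp ((mem_filter.mp π.2).2 x hx), π.1.parts_pos hx⟩, π.1.parts_sum⟩
  left_inv _ := rfl
  right_inv _ := rfl

def Nat.Partition.finsetEquivDistincts (c : ℕ) :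
    {b : Finset ℕ // (∀ x ∈ b, 0 < x) ∧ ∑ x ∈ b, x = c} ≃ Nat.Partition.distincts c where
  toFun b := ⟨⟨b.1.val, fun h => b.2.1 _ h, (sum_val _).trans b.2.2⟩,
    mem_filter.mpr ⟨mem_univ _, b.1.nodup⟩⟩
  invFun π := ⟨⟨π.1.parts, (mem_filter.mp π.2).2⟩, fun _ hx => π.1.parts_pos hx,
    (sum_val _).symm.trans π.1.parts_sum⟩
  left_inv _ := rfl
  right_inv _ := rfl

theorem card_twoColor_eq_card_oddOverpartitions (n : ℕ) :
    Nat.card {p : Finset ℕ × Finset ℕ //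
      (∀ x ∈ p.1, Odd x ∧ 0 < x) ∧ (∀ x ∈ p.2, 0 < x) ∧ ∑ x ∈ p.1, x + ∑ x ∈ p.2, x = n} =
    Nat.card {q : Finset ℕ × Multiset ℕ //
      (∀ x ∈ q.1, Odd x ∧ 0 < x) ∧ (∀ x ∈ q.2, Odd x ∧ 0 < x) ∧ ∑ x ∈ q.1, x + q.2.sum = n} := by
  have hblue c := Finite.of_equiv _ (Nat.Partition.finsetEquivDistincts c).symm
  have hodd c := Finite.of_equiv _ (Nat.Partition.multisetEquivOdds c).symm
  have hgreen (a : ℕ) : Finite {g : Finset ℕ // (∀ x ∈ g, Odd x ∧ 0 < x) ∧ ∑ x ∈ g, x = a} :=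
    Finite.of_injective (β := {b : Finset ℕ // (∀ x ∈ b, 0 < x) ∧ ∑ x ∈ b, x = a})
      (fun g => ⟨g.1, fun x hx => (g.2.1 x hx).2, g.2.2⟩)
      fun _ _ h => Subtype.ext (Subtype.ext_iff.mp h :)
  rw [Nat.card_prod_add_eq_sum_antidiagonal (fun g : Finset ℕ => ∀ x ∈ g, Odd x ∧ 0 < x)
      (fun b : Finset ℕ => ∀ x ∈ b, 0 < x) (fun g => ∑ x ∈ g, x) (fun b => ∑ x ∈ b, x),
    Nat.card_prod_add_eq_sum_antidiagonal (fun g : Finset ℕ => ∀ x ∈ g, Odd x ∧ 0 < x)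
      (fun ν : Multiset ℕ => ∀ x ∈ ν, Odd x ∧ 0 < x) (fun g => ∑ x ∈ g, x) Multiset.sum]
  refine sum_congr rfl fun ac _ => ?_
  rw [Nat.card_congr (Nat.Partition.finsetEquivDistincts _),
    Nat.card_congr (Nat.Partition.multisetEquivOdds _), Nat.card_eq_finsetCard,
    Nat.card_eq_finsetCard, Nat.Partition.card_odds_eq_card_distincts]

/-- Any bound `≥ n` on the parts would do; `2 * n` makes the generating polynomial of the blue
parts `(q; q)_{2n}`, the factor in `coeff_prod_odd_mul_qPochhammer_two_mul`. -/
def twoColorPartitions (n : ℕ) : Finset (Finset ℕ × Finset ℕ) :=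
  (((range n).image (fun i => 2 * i + 1)).powerset ×ˢ (Ico 1 (2 * n + 1)).powerset).filter
    fun p => ∑ k ∈ p.1, k + ∑ k ∈ p.2, k = n

theorem mem_twoColorPartitions {n : ℕ} {p : Finset ℕ × Finset ℕ} :
    p ∈ twoColorPartitions n ↔
      (∀ x ∈ p.1, Odd x ∧ 0 < x) ∧ (∀ x ∈ p.2, 0 < x) ∧ ∑ x ∈ p.1, x + ∑ x ∈ p.2, x = n := by
  have hle (s : Finset ℕ) (x : ℕ) (hx : x ∈ s) : x ≤ ∑ y ∈ s, y :=
    single_le_sum (fun y _ => Nat.zero_le y) hx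
  simp only [twoColorPartitions, mem_filter, mem_product, mem_powerset, subset_iff, mem_image,
    mem_range, mem_Ico]
  constructor
  · rintro ⟨⟨hg, hb⟩, hsum⟩
    refine ⟨fun x hx => ?_, fun x hx => (hb hx).1, hsum⟩
    obtain ⟨i, -, rfl⟩ := hg hx
    exact ⟨odd_two_mul_add_one i, by omega⟩
  · rintro ⟨hg, hb, hsum⟩
    refine ⟨⟨fun x hx => ?_, fun x hx => ⟨hb x hx, by have := hle _ x hx; omega⟩⟩, hsum⟩
    obtain ⟨i, rfl⟩ := (hg x hx).1
    exact ⟨i, by have := hle _ _ hx; omega, rfl⟩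

theorem sum_twoColorPartitions_neg_one_pow {n : ℕ} (hn : 0 < n) :
    ∑ p ∈ twoColorPartitions n, (-1 : ℤ) ^ (#p.1 + #p.2) =
      if IsSquare n then 2 * (-1) ^ n else 0 := by
  rw [← coeff_prod_odd_mul_qPochhammer_two_mul hn, twoColorPartitions,
    ← coeff_prod_one_sub_X_pow_mul_prod_one_sub_X_pow, prod_image (fun i _ j _ h => by omega),
    prod_Ico_eq_prod_range, Nat.add_sub_cancel]
  simp only [qPochhammer, add_comm 1]

/-- For `n ≥ 1`, `E₂(n) = p̄ₒ(n)/2 + (−1)ⁿ` if `n` is a perfect square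
and `E₂(n) = p̄ₒ(n)/2` otherwise; equivalently, as integers,
`2·E₂(n) = p̄ₒ(n) + 2·(−1)ⁿ` if `n` is a square and `2·E₂(n) = p̄ₒ(n)` otherwise.
Here `E₂(n)` counts two-color partitions `(g, b)` of `n` (with `g` a finite set of
distinct odd positive integers and `b` a finite set of distinct positive integers)
whose total number of parts `|g| + |b|` is even, and `p̄ₒ(n)` counts
overpartitions of `n` into odd parts. -/
theorem two_color_even_total_number_of_parts (n : ℕ) (hn : 0 < n) :
    2 * (Nat.card {p : Finset ℕ × Finset ℕ //
      ((∀ x ∈ p.1, Odd x ∧ 0 < x) ∧ (∀ x ∈ p.2, 0 < x) ∧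
        (∑ x ∈ p.1, x) + (∑ x ∈ p.2, x) = n) ∧
      Even (p.1.card + p.2.card)} : ℤ) =
    (if IsSquare n then
      (Nat.card {q : Finset ℕ × Multiset ℕ //
        (∀ x ∈ q.1, Odd x ∧ 0 < x) ∧ (∀ x ∈ q.2, Odd x ∧ 0 < x) ∧
        (∑ x ∈ q.1, x) + q.2.sum = n} : ℤ) + 2 * (-1) ^ n
    else
      (Nat.card {q : Finset ℕ × Multiset ℕ //
        (∀ x ∈ q.1, Odd x ∧ 0 < x) ∧ (∀ x ∈ q.2, Odd x ∧ 0 < x) ∧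
        (∑ x ∈ q.1, x) + q.2.sum = n} : ℤ)) := by
  have hall := Nat.subtype_card (twoColorPartitions n) fun p => mem_twoColorPartitions
  have heven := Nat.subtype_card ((twoColorPartitions n).filter fun p => Even (#p.1 + #p.2))
    fun p => by rw [mem_filter, mem_twoColorPartitions]
  rw [heven, two_mul_card_filter_even_eq, sum_twoColorPartitions_neg_one_pow hn, ← hall,
    card_twoColor_eq_card_oddOverpartitions]
  split_ifs <;> ring
end
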